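/- Let f ∈ C⁰(ℝ^d, ℝ^d) with d ≥ 2, y₁ ∈ ℝ, and suppose the level set L := {x : (f(x))₁ = y₁} is non-empty and compact. Let K ⊂ ℝ^d be compact with L ⊂ interior(K) and L ∩ ∂K = ∅. Then ε := (1/2)·inf_{x ∈ ∂K} |(f(x))₁ - y₁| is strictly positive, and for every homeomorphism φ : ℝ^d → ℝ^d one has sup_{x ∈ K} |(f(x))₁ - (φ(x))₁| ≥ ε. -/

import Mathlib

/-!
On `∂K` the continuous function `|f₁ - y₁|` has no zero, so its minimum over the compact set `∂K`
is positive. Given `φ`, pick `p` in the level set `L ⊆ K`. The level set `{φ₁ = φ₁ p}` is the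
preimage of a hyperplane under a homeomorphism, hence preconnected, and since `d ≥ 2` it is
unbounded, so it leaves `K` and must cross `∂K` at some `x`. As `φ₁ x = φ₁ p` and `f₁ p = y₁`,
`|f₁ x - y₁| ≤ |f₁ x - φ₁ x| + |f₁ p - φ₁ p|`, and both terms are at most the supremum over `K`.
-/

open Set Bornology

theorem IsPreconnected.inter_frontier_nonempty {X : Type*} [TopologicalSpace X] {s t : Set X}
    (hs : IsPreconnected s) (hst : (s ∩ t).Nonempty) (hst' : (s \ t).Nonempty) :
    (s ∩ frontier t).Nonempty := by
  by_contra hfr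
  have hint : ∀ x ∈ s, x ∈ closure t → x ∈ interior t := fun x hxs hxc =>
    by_contra fun hxi => hfr ⟨x, hxs, hxc, hxi⟩
  obtain ⟨p, hps, hpt⟩ := hst
  have hsub : s ⊆ interior t := hs.subset_of_closure_inter_subset isOpen_interior
    ⟨p, hps, hint p hps (subset_closure hpt)⟩
    fun x ⟨hxc, hxs⟩ => hint x hxs (closure_mono interior_subset hxc)
  obtain ⟨q, hqs, hqt⟩ := hst'
  exact hqt (interior_subset (hsub hqs))

theorem IsCompact.sInf_image_pos {X : Type*} [TopologicalSpace X] {s : Set X} {g : X → ℝ}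
    (hs : IsCompact s) (hne : s.Nonempty) (hg : ContinuousOn g s) (hpos : ∀ x ∈ s, 0 < g x) :
    0 < sInf (g '' s) := by
  obtain ⟨x, hx, hgx⟩ := (hs.image_of_continuousOn hg).sInf_mem (hne.image g)
  exact hgx ▸ hpos x hx

theorem EuclideanSpace.not_isBounded_setOf_apply_eq {ι : Type*} [Fintype ι] {i j : ι}
    (hij : i ≠ j) (c : ℝ) : ¬IsBounded {z : EuclideanSpace ℝ ι | z i = c} := by
  classical
  intro hb
  refine NormedSpace.unbounded_univ ℝ ℝ ?_
  convert (EuclideanSpace.proj j : EuclideanSpace ℝ ι →L[ℝ] ℝ).lipschitz.isBounded_image hb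
  refine (eq_univ_of_forall fun t => ?_).symm
  exact ⟨EuclideanSpace.single i c + EuclideanSpace.single j t, by simp [hij], by simp [hij.symm]⟩

theorem Homeomorph.exists_mem_frontier_apply_eq {X ι : Type*} [TopologicalSpace X] [Fintype ι]
    {i j : ι} (hij : i ≠ j) (φ : X ≃ₜ EuclideanSpace ℝ ι) {K : Set X} (hK : IsCompact K)
    {p : X} (hp : p ∈ K) : ∃ x ∈ frontier K, φ x i = φ p i := by
  set H := {z : EuclideanSpace ℝ ι | z i = φ p i}
  have hH : IsPreconnected H :=
    (convex_hyperplane (EuclideanSpace.proj i : EuclideanSpace ℝ ι →L[ℝ] ℝ).isLinear _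
      ).isPreconnected
  have hout : (φ ⁻¹' H \ K).Nonempty := by
    rw [nonempty_iff_ne_empty, Ne, sdiff_eq_empty]
    intro hHK
    refine EuclideanSpace.not_isBounded_setOf_apply_eq hij (φ p i)
      ((hK.image φ.continuous).isBounded.subset fun z hz => ?_)
    exact ⟨φ.symm z, hHK (by rwa [mem_preimage, φ.apply_symm_apply]), φ.apply_symm_apply z⟩
  obtain ⟨x, hxH, hx⟩ :=
    (φ.isPreconnected_preimage.2 hH).inter_frontier_nonempty ⟨p, rfl, hp⟩ hout
  exact ⟨x, hx, hxH⟩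

theorem stmt_12 (d : ℕ) (hd : 2 ≤ d)
    (f : EuclideanSpace ℝ (Fin d) → EuclideanSpace ℝ (Fin d)) (hf : Continuous f)
    (y₁ : ℝ) (K : Set (EuclideanSpace ℝ (Fin d)))
    (hLne : ({x | f x ⟨0, by omega⟩ = y₁} :
      Set (EuclideanSpace ℝ (Fin d))).Nonempty)
    (hK : IsCompact K)
    (hLK : {x : EuclideanSpace ℝ (Fin d) | f x ⟨0, by omega⟩ = y₁} ⊆ interior K)
    (hLbd : {x : EuclideanSpace ℝ (Fin d) | f x ⟨0, by omega⟩ = y₁} ∩ frontier K = ∅) :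
    0 < (1/2) * sInf ((fun x => |f x ⟨0, by omega⟩ - y₁|) '' frontier K) ∧
    ∀ φ : EuclideanSpace ℝ (Fin d) ≃ₜ EuclideanSpace ℝ (Fin d),
      (1/2) * sInf ((fun x => |f x ⟨0, by omega⟩ - y₁|) '' frontier K) ≤
        sSup ((fun x => |f x ⟨0, by omega⟩ - φ x ⟨0, by omega⟩|) '' K) := by
  set i₀ : Fin d := ⟨0, by omega⟩
  have hi₀ : i₀ ≠ ⟨1, by omega⟩ := by simp [i₀, Fin.ext_iff]
  have : Nonempty (Fin d) := ⟨i₀⟩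
  obtain ⟨p, hp : f p i₀ = y₁⟩ := hLne
  have hpK : p ∈ K := interior_subset (hLK hp)
  have hfrK : IsCompact (frontier K) :=
    hK.of_isClosed_subset isClosed_frontier hK.isClosed.frontier_subset
  refine ⟨mul_pos one_half_pos (hfrK.sInf_image_pos
    (nonempty_frontier_iff.2 ⟨⟨p, hpK⟩, hK.ne_univ⟩) (by fun_prop)
    fun x hx => abs_pos.2 (sub_ne_zero.2 fun h => hLbd.subset ⟨h, hx⟩)), fun φ => ?_⟩
  obtain ⟨x, hx, hφx⟩ := φ.exists_mem_frontier_apply_eq hi₀ hK hpK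
  have hbdd : BddAbove ((fun x => |f x i₀ - φ x i₀|) '' K) := hK.bddAbove_image (by fun_prop)
  calc (1/2) * sInf ((fun x => |f x i₀ - y₁|) '' frontier K)
      ≤ (1/2) * |f x i₀ - y₁| := by
        gcongr
        exact csInf_le (hfrK.bddBelow_image (by fun_prop)) ⟨x, hx, rfl⟩
    _ ≤ (1/2) * (|f x i₀ - φ x i₀| + |f p i₀ - φ p i₀|) := by
        gcongr
        rw [← hp, ← hφx, abs_sub_comm (f p i₀)]
        exact abs_sub_le _ _ _
    _ ≤ sSup ((fun x => |f x i₀ - φ x i₀|) '' K) := by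
        linarith [le_csSup hbdd ⟨x, hK.isClosed.frontier_subset hx, rfl⟩,
          le_csSup hbdd ⟨p, hpK, rfl⟩]
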